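/- For every real r with 0 < r < 1, the map w ↦ c(w) = (w + w⁻¹)/2 restricts to a bijection from the annulus {w ∈ ℂ : r < |w| < 1} onto E_{c(r), s(r)} \ [−1,1], where c(r) = (r + r⁻¹)/2 and s(r) = (r − r⁻¹)/2 are real numbers and [−1,1] denotes the real segment {x + 0i : −1 ≤ x ≤ 1} inside ℂ. -/

import Mathlib

/-!
Writing `ρ = ‖w‖`, the real and imaginary parts of `c(w)` are `(w.re / ρ) c(ρ)` and
`(w.im / ρ) s(ρ)`, so the circle `‖w‖ = ρ` is mapped onto the ellipse with semi-axes `c(ρ)`, `s(ρ)`.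
Since `c(ρ) = cosh (log ρ)` and `s(ρ)² = c(ρ)² - 1`, both semi-axes grow strictly as `ρ` decreases
in `(0, 1]`, so these ellipses are nested: `c(w)` lies inside `E_{c(r), s(r)}` exactly when
`r < ‖w‖`. The unit circle collapses onto `[-1, 1]`, while every other circle avoids it.
Injectivity on the unit disc holds because `c(w₁) = c(w₂)` forces `w₁ = w₂` or `w₁ w₂ = 1`;
surjectivity because the two roots of `w² - 2zw + 1` are mutually inverse, so one lies in the
closed unit disc.
-/

open Real

noncomputable def joukowsky (w : ℂ) : ℂ := (w + w⁻¹) / 2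

lemma joukowsky_re (w : ℂ) : (joukowsky w).re = w.re / ‖w‖ * ((‖w‖ + ‖w‖⁻¹) / 2) := by
  rcases eq_or_ne w 0 with rfl | hw
  · simp [joukowsky]
  have hρ : ‖w‖ ≠ 0 := norm_ne_zero_iff.2 hw
  simp only [joukowsky, Complex.div_ofNat_re, Complex.add_re, Complex.inv_re,
    Complex.normSq_eq_norm_sq]
  field_simp

lemma joukowsky_im (w : ℂ) : (joukowsky w).im = w.im / ‖w‖ * ((‖w‖ - ‖w‖⁻¹) / 2) := by
  rcases eq_or_ne w 0 with rfl | hw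
  · simp [joukowsky]
  have hρ : ‖w‖ ≠ 0 := norm_ne_zero_iff.2 hw
  simp only [joukowsky, Complex.div_ofNat_im, Complex.add_im, Complex.inv_im,
    Complex.normSq_eq_norm_sq]
  field_simp
  ring

lemma sq_sub_inv_div_two {x : ℝ} (hx : x ≠ 0) :
    ((x - x⁻¹) / 2) ^ 2 = ((x + x⁻¹) / 2) ^ 2 - 1 := by
  field_simp
  ring

lemma one_lt_add_inv_div_two {x : ℝ} (hx0 : 0 < x) (hx1 : x ≠ 1) : 1 < (x + x⁻¹) / 2 := by
  rw [← cosh_log hx0]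
  exact one_lt_cosh.2 (log_ne_zero_of_pos_of_ne_one hx0 hx1)

lemma sub_inv_div_two_ne_zero {x : ℝ} (hx0 : 0 < x) (hx1 : x ≠ 1) : (x - x⁻¹) / 2 ≠ 0 := by
  intro h
  have hsq := sq_sub_inv_div_two hx0.ne'
  rw [h] at hsq
  nlinarith [one_lt_add_inv_div_two hx0 hx1]

lemma sq_add_inv_div_two_lt_iff {r x : ℝ} (hr0 : 0 < r) (hr1 : r ≤ 1) (hx0 : 0 < x)
    (hx1 : x ≤ 1) : ((x + x⁻¹) / 2) ^ 2 < ((r + r⁻¹) / 2) ^ 2 ↔ r < x := by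
  rw [← cosh_log hx0, ← cosh_log hr0, sq_lt_sq₀ (cosh_pos _).le (cosh_pos _).le, cosh_lt_cosh,
    abs_of_nonpos (log_nonpos hx0.le hx1), abs_of_nonpos (log_nonpos hr0.le hr1), neg_lt_neg_iff,
    log_lt_log_iff hr0 hx0]

lemma sq_sub_inv_div_two_lt_iff {r x : ℝ} (hr0 : 0 < r) (hr1 : r ≤ 1) (hx0 : 0 < x)
    (hx1 : x ≤ 1) : ((x - x⁻¹) / 2) ^ 2 < ((r - r⁻¹) / 2) ^ 2 ↔ r < x := by
  rw [sq_sub_inv_div_two hx0.ne', sq_sub_inv_div_two hr0.ne', sub_lt_sub_iff_right]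
  exact sq_add_inv_div_two_lt_iff hr0 hr1 hx0 hx1

lemma joukowsky_mem_ellipse_iff {r : ℝ} (hr0 : 0 < r) (hr1 : r < 1) {w : ℂ} (hw0 : w ≠ 0)
    (hw1 : ‖w‖ ≤ 1) :
    ((joukowsky w).re / ((r + r⁻¹) / 2)) ^ 2 + ((joukowsky w).im / ((r - r⁻¹) / 2)) ^ 2 < 1 ↔
      r < ‖w‖ := by
  set ρ := ‖w‖ with hρ
  have hρ0 : 0 < ρ := norm_pos_iff.2 hw0
  have hunit : (w.re / ρ) ^ 2 + (w.im / ρ) ^ 2 = 1 := by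
    rw [div_pow, div_pow, ← add_div, div_eq_one_iff_eq (by positivity)]
    linarith [Complex.sq_norm_sub_sq_re w]
  have hmajor : ((ρ + ρ⁻¹) / 2 / ((r + r⁻¹) / 2)) ^ 2 < 1 ↔ r < ρ := by
    rw [div_pow, div_lt_one (by positivity)]
    exact sq_add_inv_div_two_lt_iff hr0 hr1.le hρ0 hw1
  have hminor : ((ρ - ρ⁻¹) / 2 / ((r - r⁻¹) / 2)) ^ 2 < 1 ↔ r < ρ := by
    rw [div_pow, div_lt_one (sq_pos_of_ne_zero (sub_inv_div_two_ne_zero hr0 hr1.ne))]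
    exact sq_sub_inv_div_two_lt_iff hr0 hr1.le hρ0 hw1
  rw [joukowsky_re, joukowsky_im, ← hρ, mul_div_assoc, mul_div_assoc, mul_pow, mul_pow]
  -- a convex combination of the two squared axis ratios, which lie on the same side of `1`
  rcases lt_or_ge r ρ with h | h
  · simpa only [h, iff_true, smul_eq_mul, Set.mem_Iio] using
      convex_Iio (1 : ℝ) (hmajor.2 h) (hminor.2 h) (sq_nonneg _) (sq_nonneg _) hunit
  · simpa only [h.not_gt, iff_false, not_lt, smul_eq_mul, Set.mem_Ici] using
      convex_Ici (1 : ℝ) (not_lt.1 (mt hmajor.1 h.not_gt)) (not_lt.1 (mt hminor.1 h.not_gt))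
        (sq_nonneg _) (sq_nonneg _) hunit

lemma joukowsky_mem_segment_iff {w : ℂ} (hw : w ≠ 0) :
    (joukowsky w).im = 0 ∧ -1 ≤ (joukowsky w).re ∧ (joukowsky w).re ≤ 1 ↔ ‖w‖ = 1 := by
  have hρ0 : 0 < ‖w‖ := norm_pos_iff.2 hw
  refine ⟨fun ⟨him, hre⟩ => ?_, fun h => ?_⟩
  · by_contra hρ1
    have hw_im : w.im = 0 := by
      rw [joukowsky_im] at him
      simpa [hρ0.ne', sub_inv_div_two_ne_zero hρ0 hρ1] using him
    have hre_abs : |(joukowsky w).re| = (‖w‖ + ‖w‖⁻¹) / 2 := by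
      rw [joukowsky_re, abs_mul, abs_div, Complex.abs_re_eq_norm.2 hw_im, abs_norm,
        div_self hρ0.ne', one_mul, abs_of_pos (by positivity)]
    exact (hre_abs ▸ one_lt_add_inv_div_two hρ0 hρ1).not_ge (abs_le.2 hre)
  · rw [joukowsky_re, joukowsky_im, h]
    norm_num [abs_le.1 (h ▸ Complex.abs_re_le_norm w)]

lemma joukowsky_injOn : Set.InjOn joukowsky {w | w ≠ 0 ∧ ‖w‖ < 1} := by
  rintro w₁ ⟨hw₁0, hw₁1⟩ w₂ ⟨hw₂0, hw₂1⟩ h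
  have hfactor : (w₁ - w₂) * (w₁ * w₂ - 1) = 0 := by
    simp only [joukowsky] at h
    field_simp at h
    linear_combination h
  rcases mul_eq_zero.1 hfactor with h | h
  · exact sub_eq_zero.1 h
  · have hnorm := congrArg norm (sub_eq_zero.1 h)
    rw [norm_mul, norm_one] at hnorm
    exact absurd hnorm (mul_lt_one_of_nonneg_of_lt_one_left (norm_nonneg _) hw₁1 hw₂1.le).ne

lemma exists_joukowsky_eq (z : ℂ) : ∃ w, w ≠ 0 ∧ ‖w‖ ≤ 1 ∧ joukowsky w = z := by
  obtain ⟨u, hu⟩ := IsAlgClosed.exists_eq_mul_self (z ^ 2 - 1)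
  have hprod : (z + u) * (z - u) = 1 := by linear_combination hu
  rcases le_total ‖z + u‖ 1 with h | h
  · refine ⟨z + u, left_ne_zero_of_mul_eq_one hprod, h, ?_⟩
    rw [joukowsky, inv_eq_of_mul_eq_one_right hprod]
    ring
  · refine ⟨z - u, right_ne_zero_of_mul_eq_one hprod, ?_, ?_⟩
    · have hnorm := congrArg norm hprod
      rw [norm_mul, norm_one] at hnorm
      nlinarith [norm_nonneg (z - u)]
    · rw [joukowsky, inv_eq_of_mul_eq_one_left hprod]
      ring

/-- For `0 < r < 1`, the map `w ↦ (w + w⁻¹)/2` restricts to a bijection from the annulus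
`{w : r < |w| < 1}` onto the open ellipse `E_{c(r), s(r)}` minus the real segment `[-1,1]`,
where `c(r) = (r + r⁻¹)/2` and `s(r) = (r - r⁻¹)/2`. -/
theorem stmt_1 (r : ℝ) (hr0 : 0 < r) (hr1 : r < 1) :
    Set.BijOn (fun w : ℂ => (w + w⁻¹) / 2)
      {w : ℂ | r < ‖w‖ ∧ ‖w‖ < 1}
      ({z : ℂ | (z.re / ((r + r⁻¹) / 2)) ^ 2 + (z.im / ((r - r⁻¹) / 2)) ^ 2 < 1} \
        {z : ℂ | z.im = 0 ∧ -1 ≤ z.re ∧ z.re ≤ 1}) := by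
  change Set.BijOn joukowsky _ _
  have ne_zero_of_lt_norm {w : ℂ} (hw : r < ‖w‖) : w ≠ 0 := norm_pos_iff.1 (hr0.trans hw)
  refine ⟨fun w hw => ?_, joukowsky_injOn.mono fun w hw => ?_, fun z hz => ?_⟩
  · have hw0 := ne_zero_of_lt_norm hw.1
    exact ⟨(joukowsky_mem_ellipse_iff hr0 hr1 hw0 hw.2.le).2 hw.1,
      fun hseg => hw.2.ne ((joukowsky_mem_segment_iff hw0).1 hseg)⟩
  · exact ⟨ne_zero_of_lt_norm hw.1, hw.2⟩
  · obtain ⟨w, hw0, hw1, rfl⟩ := exists_joukowsky_eq z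
    have hw_lt : ‖w‖ < 1 := hw1.lt_of_ne fun h => hz.2 ((joukowsky_mem_segment_iff hw0).2 h)
    exact ⟨w, ⟨(joukowsky_mem_ellipse_iff hr0 hr1 hw0 hw1).1 hz.1, hw_lt⟩, rfl⟩
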